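/- If A and B are 4×4 complex Hadamard matrices in dephased form, tr(A) = tr(B), and this common trace is a real number, then A and B are spectrally equivalent, i.e. the characteristic polynomial of A equals the characteristic polynomial of B. -/

import Mathlib

open Matrix Polynomial Complex

/-- A 4×4 complex Hadamard matrix: unitary with all entries of absolute value `1/√4`. -/
def IsHadamard (H : Matrix (Fin 4) (Fin 4) ℂ) : Prop :=
  H * Hᴴ = 1 ∧ Hᴴ * H = 1 ∧ ∀ i j, ‖H i j‖ = 1 / Real.sqrt 4

/-- Dephased form: all entries of the 0th row and 0th column equal `1/√4`. -/
def IsDephased (H : Matrix (Fin 4) (Fin 4) ℂ) : Prop :=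
  (∀ j, H 0 j = ((1 / Real.sqrt 4 : ℝ) : ℂ)) ∧ (∀ i, H i 0 = ((1 / Real.sqrt 4 : ℝ) : ℂ))

/-!
A dephased Hadamard matrix `A` swaps `e₀` and the constant vector `u = (1/2, 1/2, 1/2, 1/2)`: its
column `0` is `u`, and its row `0` is `u` too, so `A u = A Aᴴ e₀ = e₀`. Hence `u ± e₀` are
eigenvectors for `±1` and `charpoly A = (X² - 1)(X² - t X - d)` with `t = tr A`, `d = det A`; it
remains to see that `d` is determined by `t`.

If `t ≠ 0` is real, the two roots of `X² - t X - d` are eigenvalues of a unitary matrix, so they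
lie on the unit circle, and their sum `t` is real and nonzero; so they are conjugate and `d = -1`.

If `t = 0`, the diagonal entries `A₁₁, A₂₂, A₃₃` have modulus `1/2` and sum `-1/2`, which forces
one of them to be `-1/2`. After a permutation fixing `0` this is `A₁₁`, and then the row and
column sums and the moduli of the entries pin `A` down to `hadamardFamily x` with `x = ±1/2`,
whose determinant is `1`.
-/

open ComplexConjugate

theorem Complex.eq_conj_of_norm_eq_of_im_add_eq_zero {z w : ℂ} (hnorm : ‖z‖ = ‖w‖)
    (him : (z + w).im = 0) (hzw : z + w ≠ 0) : w = conj z := by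
  have hre : z.re + w.re ≠ 0 := fun h => hzw (Complex.ext (by simpa using h) him)
  have hsq : z.re * z.re + z.im * z.im = w.re * w.re + w.im * w.im := by
    rw [← normSq_apply, ← normSq_apply, ← Complex.sq_norm, ← Complex.sq_norm, hnorm]
  have him' : w.im = -z.im := by rw [add_im] at him; linarith
  have hre' : w.re = z.re := by
    have : (z.re - w.re) * (z.re + w.re) = 0 := by rw [him'] at hsq; linear_combination hsq
    linear_combination -(mul_eq_zero.mp this).resolve_right hre
  exact Complex.ext (by simp [hre']) (by simp [him'])

theorem Complex.eq_or_eq_or_eq_of_norm_eq_of_add_add_eq {a b c s : ℂ} (ha : ‖a‖ = ‖s‖)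
    (hb : ‖b‖ = ‖s‖) (hc : ‖c‖ = ‖s‖) (h : a + b + c = s) : a = s ∨ b = s ∨ c = s := by
  rcases eq_or_ne s 0 with rfl | hs
  · left; simpa using ha
  have hconj : conj a + conj b + conj c = conj s := by rw [← h]; simp
  have hmul_conj {z : ℂ} (hz : ‖z‖ = ‖s‖) : z * conj z = s * conj s := by
    rw [mul_conj, mul_conj, normSq_eq_norm_sq, normSq_eq_norm_sq, hz]
  -- conjugating `a + b + c = s` and using `conj z = ‖s‖² / z` gives `s (ab + bc + ca) = abc`
  have key : (s * conj s) * ((a - s) * (b - s) * (c - s)) = 0 := by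
    linear_combination -(s * a * b * c) * hconj + (s * b * c) * hmul_conj ha
      + (s * a * c) * hmul_conj hb + (s * a * b) * hmul_conj hc + (s * conj s * s ^ 2) * h
  have hs' : s * conj s ≠ 0 := mul_ne_zero hs ((_root_.map_ne_zero _).mpr hs)
  simpa [hs', sub_eq_zero, or_assoc] using key

theorem eq_zero_of_norm_sub_eq_of_norm_add_eq {E : Type*} [NormedAddCommGroup E]
    [InnerProductSpace ℝ E] {w a : E} (hsub : ‖w - a‖ = ‖a‖) (hadd : ‖w + a‖ = ‖a‖) : w = 0 := by
  have := parallelogram_law_with_norm ℝ w a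
  rw [hsub, hadd] at this
  have : ‖w‖ ^ 2 = 0 := by nlinarith
  simpa using this

theorem Matrix.isRoot_charpoly_of_mulVec_eq_smul {n K : Type*} [Fintype n] [DecidableEq n]
    [Field K] {A : Matrix n n K} {v : n → K} {μ : K} (hv : v ≠ 0) (h : A *ᵥ v = μ • v) :
    A.charpoly.IsRoot μ := by
  rw [IsRoot, eval_charpoly, ← exists_mulVec_eq_zero_iff]
  refine ⟨v, hv, ?_⟩
  rw [sub_mulVec, h, scalar_apply, ← smul_one_eq_diagonal, smul_mulVec, one_mulVec, sub_self]

theorem Polynomial.Monic.eq_X_sq_sub_one_mul_of_natDegree_eq_four {K : Type*} [Field K]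
    [NeZero (2 : K)] {p : K[X]} (hp : p.Monic) (hdeg : p.natDegree = 4) (h₁ : p.IsRoot 1)
    (h₂ : p.IsRoot (-1)) :
    p = (X ^ 2 - 1) * (X ^ 2 + C (p.coeff 3) * X - C (p.coeff 0)) := by
  have hp4 : p.coeff 4 = 1 := hdeg ▸ hp.coeff_natDegree
  have hsum : p = C (p.coeff 0) + C (p.coeff 1) * X + C (p.coeff 2) * X ^ 2
      + C (p.coeff 3) * X ^ 3 + X ^ 4 := by
    conv_lhs => rw [p.as_sum_range' 5 (by omega)]
    simp [Finset.sum_range_succ, hp4, ← C_mul_X_pow_eq_monomial]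
  rw [hsum] at h₁ h₂
  simp only [IsRoot, eval_add, eval_mul, eval_C, eval_pow, eval_X] at h₁ h₂
  have h2 : (2 : K) ≠ 0 := two_ne_zero
  have hc1 : p.coeff 1 = -p.coeff 3 := by
    apply mul_left_cancel₀ h2; linear_combination h₁ - h₂
  have hc2 : p.coeff 2 = -1 - p.coeff 0 := by
    apply mul_left_cancel₀ h2; linear_combination h₁ + h₂
  conv_lhs => rw [hsum, hc1, hc2]
  simp only [map_neg, map_sub, map_one]
  ring

theorem Matrix.charpoly_eq_of_isRoot_one_of_isRoot_neg_one {K : Type*} [Field K] [NeZero (2 : K)]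
    (A : Matrix (Fin 4) (Fin 4) K) (h₁ : A.charpoly.IsRoot 1) (h₂ : A.charpoly.IsRoot (-1)) :
    A.charpoly = (X ^ 2 - 1) * (X ^ 2 - C A.trace * X - C A.det) := by
  rw [A.charpoly_monic.eq_X_sq_sub_one_mul_of_natDegree_eq_four (by simp) h₁ h₂,
    trace_eq_neg_charpoly_coeff, det_eq_sign_charpoly_coeff]
  norm_num [sub_eq_add_neg]

theorem Matrix.trace_submatrix_equiv {m n R : Type*} [Fintype m] [Fintype n] [AddCommMonoid R]
    (e : m ≃ n) (A : Matrix n n R) : (A.submatrix e e).trace = A.trace :=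
  e.sum_comp A.diag

open scoped Matrix.Norms.L2Operator in
theorem Matrix.norm_eq_one_of_isRoot_charpoly {n : Type*} [Fintype n] [DecidableEq n]
    {U : Matrix n n ℂ} (hU : U ∈ unitary (Matrix n n ℂ)) {μ : ℂ} (hμ : U.charpoly.IsRoot μ) :
    ‖μ‖ = 1 :=
  spectrum.norm_eq_one_of_unitary hU (Matrix.mem_spectrum_iff_isRoot_charpoly.mpr hμ)

section Hadamard

variable {A : Matrix (Fin 4) (Fin 4) ℂ}

theorem IsDephased.apply_zero_left (hA' : IsDephased A) (j : Fin 4) : A 0 j = 1 / 2 := by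
  rw [hA'.1 j]; norm_num

theorem IsDephased.apply_zero_right (hA' : IsDephased A) (i : Fin 4) : A i 0 = 1 / 2 := by
  rw [hA'.2 i]; norm_num

theorem IsHadamard.norm_apply (hA : _root_.IsHadamard A) (i j : Fin 4) : ‖A i j‖ = 1 / 2 := by
  rw [hA.2.2 i j, show (4 : ℝ) = 2 ^ 2 by norm_num, Real.sqrt_sq zero_le_two]

theorem IsHadamard.mul_conj_apply (hA : _root_.IsHadamard A) (i j : Fin 4) :
    A i j * conj (A i j) = 1 / 4 := by
  rw [mul_conj, normSq_eq_norm_sq, hA.norm_apply]; norm_num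

theorem IsHadamard.mem_unitary (hA : _root_.IsHadamard A) :
    A ∈ unitary (Matrix (Fin 4) (Fin 4) ℂ) :=
  Unitary.mem_iff.mpr ⟨hA.2.1, hA.1⟩

theorem IsHadamard.mulVec_const_half (hA : _root_.IsHadamard A) (hA' : IsDephased A) :
    A *ᵥ (fun _ => 1 / 2) = Pi.single 0 1 := by
  have hrow : Aᴴ *ᵥ Pi.single 0 1 = fun _ => 1 / 2 := by
    ext j; simp [hA'.apply_zero_left j]
  rw [← hrow, mulVec_mulVec, hA.1, one_mulVec]

theorem IsHadamard.const_half_vecMul (hA : _root_.IsHadamard A) (hA' : IsDephased A) :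
    (fun _ => 1 / 2) ᵥ* A = Pi.single 0 1 := by
  have hcol : Pi.single 0 1 ᵥ* Aᴴ = fun _ => 1 / 2 := by
    ext i; simp [hA'.apply_zero_right i]
  rw [← hcol, vecMul_vecMul, hA.2.1, vecMul_one]

theorem IsHadamard.row_sum_eq_zero (hA : _root_.IsHadamard A) (hA' : IsDephased A) {i : Fin 4}
    (hi : i ≠ 0) : A i 0 + A i 1 + A i 2 + A i 3 = 0 := by
  have h := congrFun (hA.mulVec_const_half hA') i
  simp only [mulVec, dotProduct, Fin.sum_univ_four, Pi.single_eq_of_ne hi] at h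
  linear_combination 2 * h

theorem IsHadamard.col_sum_eq_zero (hA : _root_.IsHadamard A) (hA' : IsDephased A) {j : Fin 4}
    (hj : j ≠ 0) : A 0 j + A 1 j + A 2 j + A 3 j = 0 := by
  have h := congrFun (hA.const_half_vecMul hA') j
  simp only [vecMul, dotProduct, Fin.sum_univ_four, Pi.single_eq_of_ne hj] at h
  linear_combination 2 * h

theorem IsHadamard.isRoot_charpoly (hA : _root_.IsHadamard A) (hA' : IsDephased A) {ε : ℂ}
    (hε : ε ^ 2 = 1) : A.charpoly.IsRoot ε := by
  refine isRoot_charpoly_of_mulVec_eq_smul (v := (fun _ => 1 / 2) + ε • Pi.single 0 1)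
    (fun h => by simpa using congrFun h 1) ?_
  have hcol : A *ᵥ Pi.single 0 1 = fun _ => 1 / 2 := by
    ext i; simp [hA'.apply_zero_right i]
  rw [mulVec_add, mulVec_smul, hA.mulVec_const_half hA', hcol, smul_add, smul_smul, ← sq, hε,
    one_smul, add_comm]

theorem IsHadamard.charpoly_eq (hA : _root_.IsHadamard A) (hA' : IsDephased A) :
    A.charpoly = (X ^ 2 - 1) * (X ^ 2 - C A.trace * X - C A.det) :=
  A.charpoly_eq_of_isRoot_one_of_isRoot_neg_one (hA.isRoot_charpoly hA' (one_pow 2))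
    (hA.isRoot_charpoly hA' (by norm_num))

theorem IsHadamard.det_eq_neg_one_of_trace_ne_zero (hA : _root_.IsHadamard A) (hA' : IsDephased A)
    (hreal : A.trace.im = 0) (ht : A.trace ≠ 0) : A.det = -1 := by
  set q : ℂ[X] := X ^ 2 - C A.trace * X - C A.det
  have hq (z : ℂ) : q.IsRoot z ↔ z ^ 2 - A.trace * z - A.det = 0 := by simp [q]
  have hnorm (z : ℂ) (hz : q.IsRoot z) : ‖z‖ = 1 :=
    norm_eq_one_of_isRoot_charpoly hA.mem_unitary
      (by rw [hA.charpoly_eq hA']; exact root_mul_left_of_isRoot _ hz)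
  have hdeg : q.degree = 2 := by simp only [q]; compute_degree!
  obtain ⟨z, hz⟩ := Complex.exists_root (f := q) (by rw [hdeg]; norm_num)
  have hz' : q.IsRoot (A.trace - z) := by
    rw [hq] at hz ⊢; linear_combination hz
  have hconj : A.trace - z = conj z :=
    eq_conj_of_norm_eq_of_im_add_eq_zero (by rw [hnorm z hz, hnorm _ hz']) (by simpa) (by simpa)
  rw [hq] at hz
  calc A.det = -(z * (A.trace - z)) := by linear_combination -hz
    _ = -1 := by rw [hconj, mul_conj, normSq_eq_norm_sq, hnorm z ((hq z).mpr hz)]; norm_num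

theorem IsHadamard.submatrix (hA : _root_.IsHadamard A) (σ : Equiv.Perm (Fin 4)) :
    _root_.IsHadamard (A.submatrix σ σ) := by
  refine ⟨?_, ?_, fun i j => hA.2.2 (σ i) (σ j)⟩
  · rw [conjTranspose_submatrix, submatrix_mul_equiv, hA.1, submatrix_one_equiv]
  · rw [conjTranspose_submatrix, submatrix_mul_equiv, hA.2.1, submatrix_one_equiv]

theorem IsDephased.submatrix (hA' : IsDephased A) {σ : Equiv.Perm (Fin 4)} (hσ : σ 0 = 0) :
    IsDephased (A.submatrix σ σ) :=
  ⟨fun j => by simpa [hσ] using hA'.1 (σ j), fun i => by simpa [hσ] using hA'.2 (σ i)⟩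

noncomputable def hadamardFamily (x : ℂ) : Matrix (Fin 4) (Fin 4) ℂ :=
  !![1 / 2, 1 / 2, 1 / 2, 1 / 2;
     1 / 2, -(1 / 2), x, -x;
     1 / 2, x, -x, -(1 / 2);
     1 / 2, -x, -(1 / 2), x]

theorem det_hadamardFamily (x : ℂ) : (hadamardFamily x).det = (1 + 12 * x ^ 2) / 4 := by
  simp [hadamardFamily, det_succ_row_zero, Fin.sum_univ_succ, Fin.succAbove]
  ring

theorem sq_eq_of_isHadamard_hadamardFamily {x : ℂ} (hA : _root_.IsHadamard (hadamardFamily x)) :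
    x ^ 2 = 1 / 4 := by
  have hnorm : x * conj x = 1 / 4 := hA.mul_conj_apply 1 2
  have horth : (hadamardFamily x * (hadamardFamily x)ᴴ) 1 2 = 0 := by rw [hA.1]; rfl
  simp only [hadamardFamily, mul_apply, Fin.sum_univ_four, conjTranspose_apply, of_apply,
    cons_val', cons_val_fin_one, cons_val_one, cons_val_zero, cons_val, RCLike.star_def, map_neg,
    map_div₀, map_one, map_ofNat] at horth
  -- orthogonality of rows 1 and 2 makes `x` real
  have hreal : conj x = x := by linear_combination -2 * horth - 2 * hnorm
  rw [← hnorm, hreal, sq]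

theorem IsHadamard.eq_hadamardFamily_of_trace_eq_zero (hA : _root_.IsHadamard A)
    (hA' : IsDephased A) (ht : A.trace = 0) (h11 : A 1 1 = -(1 / 2)) :
    A = hadamardFamily (A 1 2) := by
  have e0r := hA'.apply_zero_left
  have e0c := hA'.apply_zero_right
  have htr : A 0 0 + A 1 1 + A 2 2 + A 3 3 = 0 := by
    rw [← ht, trace, Fin.sum_univ_four]; rfl
  have hr1 := hA.row_sum_eq_zero hA' (i := 1) (by decide)
  have hr2 := hA.row_sum_eq_zero hA' (i := 2) (by decide)
  have hc1 := hA.col_sum_eq_zero hA' (j := 1) (by decide)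
  have hc2 := hA.col_sum_eq_zero hA' (j := 2) (by decide)
  have hc3 := hA.col_sum_eq_zero hA' (j := 3) (by decide)
  have h13 : A 1 3 = -A 1 2 := by linear_combination hr1 - e0c 1 - h11
  have h33 : A 3 3 = -A 2 2 := by linear_combination htr - e0r 0 - h11
  have h23 : A 2 3 = A 1 2 + A 2 2 - 1 / 2 := by linear_combination hc3 - e0r 3 - h13 - h33
  have h32 : A 3 2 = -(A 1 2 + A 2 2 + 1 / 2) := by linear_combination hc2 - e0r 2
  have h22 : A 2 2 = -A 1 2 := by
    have := eq_zero_of_norm_sub_eq_of_norm_add_eq (w := A 1 2 + A 2 2) (a := (1 / 2 : ℂ))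
      (by rw [← h23, hA.norm_apply]; norm_num)
      (by rw [← neg_eq_iff_eq_neg.mpr h32, norm_neg, hA.norm_apply]; norm_num)
    linear_combination this
  have h21 : A 2 1 = A 1 2 := by linear_combination hr2 - e0c 2 - h23 - 2 * h22
  have h31 : A 3 1 = -A 1 2 := by linear_combination hc1 - e0r 1 - h11 - h21
  have h23' : A 2 3 = -(1 / 2) := by linear_combination h23 + h22
  have h32' : A 3 2 = -(1 / 2) := by linear_combination h32 - h22
  have h33' : A 3 3 = A 1 2 := by linear_combination h33 - h22
  ext i j
  fin_cases i <;> fin_cases j <;>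
    simp [hadamardFamily, e0r, e0c, h11, h13, h21, h22, h23', h31, h32', h33']

theorem IsHadamard.det_eq_one_of_trace_eq_zero (hA : _root_.IsHadamard A) (hA' : IsDephased A)
    (ht : A.trace = 0) : A.det = 1 := by
  have hdiag : A 1 1 + A 2 2 + A 3 3 = -(1 / 2) := by
    rw [trace, Fin.sum_univ_four] at ht
    simp only [diag_apply] at ht
    linear_combination ht - hA'.apply_zero_left 0
  have hnorm (i j : Fin 4) : ‖A i j‖ = ‖-(1 / 2 : ℂ)‖ := by rw [hA.norm_apply]; norm_num
  have of_diag {k : Fin 4} (hk : k ≠ 0) (hkk : A k k = -(1 / 2)) : A.det = 1 := by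
    set σ := Equiv.swap 1 k
    have hσ : σ 0 = 0 := Equiv.swap_apply_of_ne_of_ne (by decide) hk.symm
    have hAσ := hA.submatrix σ
    have hform := hAσ.eq_hadamardFamily_of_trace_eq_zero (hA'.submatrix hσ)
      (by rw [trace_submatrix_equiv, ht]) (by simpa [σ] using hkk)
    rw [hform] at hAσ
    rw [← det_submatrix_equiv_self σ A, hform, det_hadamardFamily,
      sq_eq_of_isHadamard_hadamardFamily hAσ]
    norm_num
  rcases eq_or_eq_or_eq_of_norm_eq_of_add_add_eq (hnorm 1 1) (hnorm 2 2) (hnorm 3 3) hdiag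
    with h | h | h
  exacts [of_diag (by decide) h, of_diag (by decide) h, of_diag (by decide) h]

theorem IsHadamard.det_eq_ite (hA : _root_.IsHadamard A) (hA' : IsDephased A)
    (hreal : A.trace.im = 0) : A.det = if A.trace = 0 then 1 else -1 := by
  split_ifs with ht
  exacts [hA.det_eq_one_of_trace_eq_zero hA' ht, hA.det_eq_neg_one_of_trace_ne_zero hA' hreal ht]

end Hadamard

theorem real_trace_eq_implies_spectrally_equivalent
    (A B : Matrix (Fin 4) (Fin 4) ℂ)
    (hA : _root_.IsHadamard A) (hA' : IsDephased A)
    (hB : _root_.IsHadamard B) (hB' : IsDephased B)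
    (htr : A.trace = B.trace) (hreal : (A.trace).im = 0) :
    A.charpoly = B.charpoly := by
  rw [hA.charpoly_eq hA', hB.charpoly_eq hB', hA.det_eq_ite hA' hreal,
    hB.det_eq_ite hB' (htr ▸ hreal), htr]
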